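/- arXiv:2203.16366 — 3 statements merged into one kernel-verified Lean document; each statement's English description precedes it below -/
import Mathlib

section
/- Let S ⊆ S^{d-1} be a subset of the unit sphere in R^d such that every open hemisphere of S^{d-1} contains a point in the interior of S (interior taken in S^{d-1}). Then the origin lies in the interior of the convex hull of the interior of S. -/
open RealInnerProductSpace

/-- The interior of `S` relative to the unit sphere `S^{d-1}`. -/
def sphereInterior {d : ℕ} (S : Set (EuclideanSpace ℝ (Fin d))) :
    Set (EuclideanSpace ℝ (Fin d)) :=
  {u ∈ S | ∃ ε > 0, ∀ v ∈ Metric.sphere (0 : EuclideanSpace ℝ (Fin d)) 1,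
    dist v u < ε → v ∈ S}

/-!
By compactness of the unit sphere, finitely many points `u` of the relative interior and one
`δ > 0` already suffice: every unit vector `w` has `δ ≤ ⟪u, w⟫` for one of them. The convex hull
of these finitely many points is closed, and a point of the open `δ`-ball outside it could be
separated from it by a functional `f`, which is impossible since `f` reaches `δ * ‖f‖` on the
hull but stays below it on the ball.
-/

theorem ball_zero_subset_of_forall_exists_mul_norm_le {E : Type*} [NormedAddCommGroup E]
    [NormedSpace ℝ E] {C : Set E} (hC : Convex ℝ C) (hCc : IsClosed C) {δ : ℝ}
    (h : ∀ f : StrongDual ℝ E, ∃ u ∈ C, δ * ‖f‖ ≤ f u) : Metric.ball 0 δ ⊆ C := by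
  intro y hy
  by_contra hyC
  obtain ⟨f, c, hfC, hfy⟩ := geometric_hahn_banach_closed_point hC hCc hyC
  obtain ⟨u, huC, hfu⟩ := h f
  have hy' : ‖y‖ ≤ δ := (mem_ball_zero_iff.1 hy).le
  refine lt_irrefl (δ * ‖f‖) ?_
  calc δ * ‖f‖ ≤ f u := hfu
    _ < f y := (hfC u huC).trans hfy
    _ ≤ ‖f‖ * ‖y‖ := (le_abs_self _).trans (f.le_opNorm y)
    _ ≤ δ * ‖f‖ := by rw [mul_comm]; exact mul_le_mul_of_nonneg_right hy' (norm_nonneg f)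

section InnerProductSpace

variable {E : Type*} [NormedAddCommGroup E] [InnerProductSpace ℝ E]

theorem exists_finset_forall_norm_eq_one_exists_le_inner [ProperSpace E] {T : Set E}
    (h : ∀ w : E, ‖w‖ = 1 → ∃ u ∈ T, 0 < ⟪u, w⟫) :
    ∃ t : Finset E, ↑t ⊆ T ∧ ∃ δ > 0, ∀ w : E, ‖w‖ = 1 → ∃ u ∈ t, δ ≤ ⟪u, w⟫ := by
  classical
  -- Refining the hemisphere cover by the levels `1 / (n + 1) < ⟪u, w⟫` makes `δ` uniform.
  let U : T × ℕ → Set E := fun p => {w | 1 / (p.2 + 1 : ℝ) < ⟪(p.1 : E), w⟫}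
  have hU : ∀ p, IsOpen (U p) := fun p =>
    isOpen_lt continuous_const (continuous_const.inner continuous_id)
  have hcover : Metric.sphere (0 : E) 1 ⊆ ⋃ p, U p := by
    intro w hw
    obtain ⟨u, hu, hpos⟩ := h w (mem_sphere_zero_iff_norm.1 hw)
    obtain ⟨n, hn⟩ := exists_nat_one_div_lt hpos
    exact Set.mem_iUnion.2 ⟨(⟨u, hu⟩, n), hn⟩
  obtain ⟨b, hb⟩ := (isCompact_sphere (0 : E) 1).elim_finite_subcover U hU hcover
  refine ⟨b.image fun p => (p.1 : E), ?_, 1 / (b.sup Prod.snd + 1 : ℝ), by positivity,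
    fun w hw => ?_⟩
  · intro u hu
    obtain ⟨p, -, rfl⟩ := Finset.mem_image.1 hu
    exact p.1.2
  obtain ⟨p, hpb, hpw⟩ := Set.mem_iUnion₂.1 (hb (mem_sphere_zero_iff_norm.2 hw))
  have hle : (p.2 : ℝ) ≤ b.sup Prod.snd := by exact_mod_cast Finset.le_sup (f := Prod.snd) hpb
  refine ⟨p.1, Finset.mem_image_of_mem _ hpb, le_trans ?_ hpw.le⟩
  gcongr

theorem exists_mul_norm_le_inner_of_forall_norm_eq_one [Nontrivial E] {t : Set E} {δ : ℝ}
    (h : ∀ w : E, ‖w‖ = 1 → ∃ u ∈ t, δ ≤ ⟪u, w⟫) (w : E) : ∃ u ∈ t, δ * ‖w‖ ≤ ⟪u, w⟫ := by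
  rcases eq_or_ne w 0 with rfl | hw
  · obtain ⟨e, he⟩ := exists_norm_eq E zero_le_one
    obtain ⟨u, hu, -⟩ := h e he
    exact ⟨u, hu, by simp⟩
  · have hw' : 0 < ‖w‖ := norm_pos_iff.2 hw
    obtain ⟨u, hu, huw⟩ := h (‖w‖⁻¹ • w) (by simp [norm_smul, hw'.ne'])
    refine ⟨u, hu, ?_⟩
    rw [real_inner_smul_right, le_inv_mul_iff₀ hw'] at huw
    linarith

end InnerProductSpace

theorem origin_mem_interior_convexHull_of_hemispheres_general
    (d : ℕ) (hd : 2 ≤ d) (S : Set (EuclideanSpace ℝ (Fin d)))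
    (hhemi : ∀ w : EuclideanSpace ℝ (Fin d), ‖w‖ = 1 →
      ∃ u ∈ sphereInterior S, 0 < ⟪u, w⟫) :
    (0 : EuclideanSpace ℝ (Fin d)) ∈ interior (convexHull ℝ (sphereInterior S)) := by
  have : Nonempty (Fin d) := ⟨⟨0, by omega⟩⟩
  obtain ⟨t, htS, δ, hδ, ht⟩ := exists_finset_forall_norm_eq_one_exists_le_inner hhemi
  have hball : Metric.ball 0 δ ⊆ convexHull ℝ (t : Set (EuclideanSpace ℝ (Fin d))) := by
    refine ball_zero_subset_of_forall_exists_mul_norm_le (convex_convexHull ℝ _)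
      (t.finite_toSet.isClosed_convexHull ℝ) fun f => ?_
    let w := (InnerProductSpace.toDual ℝ _).symm f
    obtain ⟨u, hut, hu⟩ := exists_mul_norm_le_inner_of_forall_norm_eq_one ht w
    refine ⟨u, subset_convexHull ℝ _ hut, ?_⟩
    rwa [real_inner_comm, InnerProductSpace.toDual_symm_apply, LinearIsometryEquiv.norm_map] at hu
  exact mem_interior.2 ⟨_, hball.trans (convexHull_mono htS), Metric.isOpen_ball,
    Metric.mem_ball_self hδ⟩

/-- if every open hemisphere of `S^{d-1}` contains a point of the
relative interior of `S ⊆ S^{d-1}`, then the origin lies in the interior of the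
convex hull of the relative interior of `S`. -/
theorem origin_mem_interior_convexHull_of_hemispheres
    (d : ℕ) (hd : 2 ≤ d) (S : Set (EuclideanSpace ℝ (Fin d)))
    (hS : S ⊆ Metric.sphere 0 1)
    (hhemi : ∀ w : EuclideanSpace ℝ (Fin d), ‖w‖ = 1 →
      ∃ u ∈ sphereInterior S, 0 < ⟪u, w⟫) :
    (0 : EuclideanSpace ℝ (Fin d)) ∈ interior (convexHull ℝ (sphereInterior S)) :=
  origin_mem_interior_convexHull_of_hemispheres_general d hd S hhemi
end

section
/- Bound on the number of edges: Let σ ≥ 2, let L_1,...,L_σ : R^d → R be linear forms with Σ_s L_s = 0, and let A_1,...,A_σ be finite subsets of Z^d. Set ε = min_{s} min_{i ∈ A_s} L_s(i), assumed strictly positive, and R = − Σ_{s} min_{i ∈ A} L_s(i) where A = ∪_s A_s. Let (V,𝓔,ψ) be a Toom graph with σ charges and an embedding ψ : V → Z^d, and suppose the edge set decomposes as E = E^⋆ ∪ E^∘ ∪ E^{vert} where: every edge (v,w) ∈ E^⋆ of charge s satisfies ψ(w) − ψ(v) ∈ A_s; every edge (v,w) ∈ E^∘ satisfies ψ(w)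 − ψ(v) ∈ A; and every edge in E^{vert} satisfies ψ(w) = ψ(v). If E^∘ consists of exactly one edge of each charge out of each of m designated sources (so |E^∘| = σm, with m sources contributing), and |E^⋆| = n, then n ≤ Rm/ε. -/
/-- In-degree of `v` in a set of directed edges. -/
def inDeg {V : Type*} [DecidableEq V] (Es : Finset (V × V)) (v : V) : ℕ :=
  (Es.filter fun e => e.2 = v).card

/-- Out-degree of `v` in a set of directed edges. -/
def outDeg {V : Type*} [DecidableEq V] (Es : Finset (V × V)) (v : V) : ℕ :=
  (Es.filter fun e => e.1 = v).card

/-- The Toom graph condition: every vertex is isolated, a source, a sink, or an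
internal vertex of a single charge. -/
def IsToomGraph {V : Type*} [DecidableEq V] {σ : ℕ} (E : Fin σ → Finset (V × V)) : Prop :=
  ∀ v : V,
    (∀ s, inDeg (E s) v = 0 ∧ outDeg (E s) v = 0) ∨
    (∀ s, inDeg (E s) v = 0 ∧ outDeg (E s) v = 1) ∨
    (∀ s, inDeg (E s) v = 1 ∧ outDeg (E s) v = 0) ∨
    (∃ s, inDeg (E s) v = 1 ∧ outDeg (E s) v = 1 ∧
      ∀ l, l ≠ s → inDeg (E l) v = 0 ∧ outDeg (E l) v = 0)

/-- Coercion of an integer site to a real vector. -/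
def toReal {d : ℕ} (i : Fin d → ℤ) : Fin d → ℝ := fun k => (i k : ℝ)


lemma sum_edge_diff {V : Type} [Fintype V] [DecidableEq V] (Es : Finset (V × V)) (g : V → ℝ) :
    ∑ e ∈ Es, (g e.2 - g e.1) = ∑ v, g v * ((inDeg Es v : ℝ) - (outDeg Es v : ℝ)) := by
  have h2 : ∑ e ∈ Es, g e.2 = ∑ v, (inDeg Es v : ℝ) * g v := by
    rw [← Finset.sum_fiberwise_of_maps_to (g := fun e : V × V => e.2)
      (fun e _ => Finset.mem_univ e.2) (fun e => g e.2)]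
    refine Finset.sum_congr rfl fun v _ => ?_
    rw [inDeg, Finset.sum_congr rfl
      (fun e he => by rw [(Finset.mem_filter.mp he).2] :
        ∀ e ∈ Es.filter (fun e => e.2 = v), g e.2 = g v)]
    simp [mul_comm]
  have h1 : ∑ e ∈ Es, g e.1 = ∑ v, (outDeg Es v : ℝ) * g v := by
    rw [← Finset.sum_fiberwise_of_maps_to (g := fun e : V × V => e.1)
      (fun e _ => Finset.mem_univ e.1) (fun e => g e.1)]
    refine Finset.sum_congr rfl fun v _ => ?_
    rw [outDeg, Finset.sum_congr rfl
      (fun e he => by rw [(Finset.mem_filter.mp he).2] :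
        ∀ e ∈ Es.filter (fun e => e.1 = v), g e.1 = g v)]
    simp [mul_comm]
  rw [Finset.sum_sub_distrib, h1, h2, ← Finset.sum_sub_distrib]
  exact Finset.sum_congr rfl fun v _ => by ring

lemma toReal_sub {d : ℕ} (a b : Fin d → ℤ) : toReal (a - b) = toReal a - toReal b := by
  funext k; simp [toReal]

/-- bound on the number of edges: with `ε` the minimal drift and `R`
the total negative drift, an embedded Toom graph whose edges split into `n` edges of
type `E^⋆` (charge-`s` increments in `A_s`), edges of type `E^∘` (one per charge out
of each of `m` designated sources, increments in `A = ∪_s A_s`) and vertical edges,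
satisfies `n ≤ Rm/ε`. -/
theorem toom_edge_bound
    (d σ n m : ℕ) (hσ : 2 ≤ σ)
    (L : Fin σ → (Fin d → ℝ) →ₗ[ℝ] ℝ) (hL : ∑ s, L s = 0)
    (A : Fin σ → Finset (Fin d → ℤ)) (hA : ∀ s, (A s).Nonempty)
    (ε : ℝ) (hεpos : 0 < ε)
    (hεle : ∀ s, ∀ i ∈ A s, ε ≤ L s (toReal i))
    (hεmin : ∃ s, ∃ i ∈ A s, L s (toReal i) = ε)
    (ms : Fin σ → ℝ)
    (hmsle : ∀ s, ∀ i ∈ Finset.univ.biUnion A, ms s ≤ L s (toReal i))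
    (hmsmin : ∀ s, ∃ i ∈ Finset.univ.biUnion A, L s (toReal i) = ms s)
    (R : ℝ) (hR : R = -∑ s, ms s)
    (V : Type) [Fintype V] [DecidableEq V]
    (E Estar Ecirc Evert : Fin σ → Finset (V × V))
    (hsplit : ∀ s, E s = Estar s ∪ Ecirc s ∪ Evert s)
    (hd1 : ∀ s, Disjoint (Estar s) (Ecirc s))
    (hd2 : ∀ s, Disjoint (Estar s) (Evert s))
    (hd3 : ∀ s, Disjoint (Ecirc s) (Evert s))
    (hT : IsToomGraph E)
    (ψ : V → (Fin d → ℤ))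
    (hstar : ∀ s, ∀ e ∈ Estar s, ψ e.2 - ψ e.1 ∈ A s)
    (hcirc : ∀ s, ∀ e ∈ Ecirc s, ψ e.2 - ψ e.1 ∈ Finset.univ.biUnion A)
    (hvert : ∀ s, ∀ e ∈ Evert s, ψ e.2 = ψ e.1)
    (sources : Finset V) (hm : sources.card = m)
    (hcircsrc : ∀ s, ∀ e ∈ Ecirc s, e.1 ∈ sources)
    (hcircone : ∀ s, ∀ v ∈ sources, ((Ecirc s).filter fun e => e.1 = v).card = 1)
    (hn : n = ∑ s, (Estar s).card) :
    (n : ℝ) ≤ R * m / ε := by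
  set g : Fin σ → V → ℝ := fun s v => L s (toReal (ψ v)) with hg
  -- difference along an edge equals L of the increment
  have hdiff : ∀ (s : Fin σ) (e : V × V),
      g s e.2 - g s e.1 = L s (toReal (ψ e.2 - ψ e.1)) := by
    intro s e
    rw [toReal_sub, map_sub]
  -- zero sum
  have hzero : ∑ s, ∑ e ∈ E s, (g s e.2 - g s e.1) = 0 := by
    have : ∀ s, ∑ e ∈ E s, (g s e.2 - g s e.1)
        = ∑ v, g s v * ((inDeg (E s) v : ℝ) - (outDeg (E s) v : ℝ)) :=
      fun s => sum_edge_diff (E s) (g s)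
    rw [Finset.sum_congr rfl fun s _ => this s, Finset.sum_comm]
    refine Finset.sum_eq_zero fun v _ => ?_
    have hLv : ∑ s, g s v = 0 := by
      have := congrArg (fun φ : (Fin d → ℝ) →ₗ[ℝ] ℝ => φ (toReal (ψ v))) hL
      simpa [hg] using this
    rcases hT v with h | h | h | ⟨s0, h1, h2, h3⟩
    · refine Finset.sum_eq_zero fun s _ => ?_
      rw [(h s).1, (h s).2]; simp
    · have : ∀ s, g s v * ((inDeg (E s) v : ℝ) - (outDeg (E s) v : ℝ)) = -(g s v) := by
        intro s; rw [(h s).1, (h s).2]; push_cast; ring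
      rw [Finset.sum_congr rfl fun s _ => this s, Finset.sum_neg_distrib, hLv, neg_zero]
    · have : ∀ s, g s v * ((inDeg (E s) v : ℝ) - (outDeg (E s) v : ℝ)) = g s v := by
        intro s; rw [(h s).1, (h s).2]; push_cast; ring
      rw [Finset.sum_congr rfl fun s _ => this s, hLv]
    · refine Finset.sum_eq_zero fun s _ => ?_
      rcases eq_or_ne s s0 with rfl | hss
      · rw [h1, h2]; simp
      · rw [(h3 s hss).1, (h3 s hss).2]; simp
  -- split the sum
  have hEsum : ∀ s, ∑ e ∈ E s, (g s e.2 - g s e.1)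
      = ∑ e ∈ Estar s, (g s e.2 - g s e.1) + ∑ e ∈ Ecirc s, (g s e.2 - g s e.1)
        + ∑ e ∈ Evert s, (g s e.2 - g s e.1) := by
    intro s
    rw [hsplit s, Finset.sum_union (Finset.disjoint_union_left.mpr ⟨hd2 s, hd3 s⟩),
      Finset.sum_union (hd1 s)]
  -- vertical edges contribute 0
  have hvert0 : ∀ s, ∑ e ∈ Evert s, (g s e.2 - g s e.1) = 0 := by
    intro s
    refine Finset.sum_eq_zero fun e he => ?_
    rw [hg]; simp [hvert s e he]
  -- star edges
  have hstar_ge : ∀ s, ((Estar s).card : ℝ) * ε ≤ ∑ e ∈ Estar s, (g s e.2 - g s e.1) := by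
    intro s
    have := Finset.card_nsmul_le_sum (Estar s) (fun e => g s e.2 - g s e.1) ε
      (fun e he => by show ε ≤ g s e.2 - g s e.1; rw [hdiff]; exact hεle s _ (hstar s e he))
    simpa [nsmul_eq_mul] using this
  -- circ edge counts
  have hcard : ∀ s, (Ecirc s).card = m := by
    intro s
    rw [Finset.card_eq_sum_card_fiberwise (hcircsrc s)]
    rw [Finset.sum_congr rfl (hcircone s), Finset.sum_const, smul_eq_mul, mul_one, hm]
  have hcirc_ge : ∀ s, (m : ℝ) * ms s ≤ ∑ e ∈ Ecirc s, (g s e.2 - g s e.1) := by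
    intro s
    have := Finset.card_nsmul_le_sum (Ecirc s) (fun e => g s e.2 - g s e.1) (ms s)
      (fun e he => by show ms s ≤ g s e.2 - g s e.1; rw [hdiff]; exact hmsle s _ (hcirc s e he))
    rw [hcard s] at this
    simpa [nsmul_eq_mul] using this
  -- assemble
  have hmain : (n : ℝ) * ε + (m : ℝ) * (∑ s, ms s) ≤ 0 := by
    rw [← hzero, Finset.sum_congr rfl fun s _ => hEsum s]
    have h1 : (n : ℝ) * ε = ∑ s, ((Estar s).card : ℝ) * ε := by
      rw [← Finset.sum_mul, hn]; push_cast; ring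
    have h2 : (m : ℝ) * (∑ s, ms s) = ∑ s, (m : ℝ) * ms s := by
      rw [Finset.mul_sum]
    rw [h1, h2, ← Finset.sum_add_distrib]
    refine Finset.sum_le_sum fun s _ => ?_
    rw [hvert0 s, add_zero]
    exact add_le_add (hstar_ge s) (hcirc_ge s)
  rw [le_div_iff₀ hεpos]
  have : (∑ s, ms s) = -R := by rw [hR]; ring
  rw [this] at hmain
  nlinarith
end

section
/- In any Toom contour (V, 𝓔, v_∘, ψ), every directed path from a source to a sink has embedding consisting of a (possibly empty) sequence of diagonal segments followed by a (possibly empty) sequence of vertical segments; in particular, if (v,w) is an edge whose embedded segment is vertical (ψ⃗(w) = ψ⃗(v)) and (w,z) is the next edge on the path, then the segment of (w,z) is also vertical. -/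
/-- `v` is an internal vertex of charge `s`. -/
def Internal {V : Type*} [DecidableEq V] {σ : ℕ} (E : Fin σ → Finset (V × V))
    (s : Fin σ) (v : V) : Prop :=
  inDeg (E s) v = 1 ∧ outDeg (E s) v = 1

/-- The sinks: vertices with no outgoing edge of any type. -/
def IsSink {V : Type*} [DecidableEq V] {σ : ℕ} (E : Fin σ → Finset (V × V)) (v : V) :
    Prop :=
  ∀ s, outDeg (E s) v = 0

/-- in a Toom contour, along any directed path the embedding consists of
diagonal segments followed by vertical segments: there is an index `jmp` such that the
`t`-th segment is vertical exactly when `jmp ≤ t`; in particular, if an edge `(v,w)` is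
embedded as a vertical segment, so is any subsequent edge `(w,z)`. -/
theorem toom_contour_vertical_tail
    (d σ : ℕ) (hσ : 2 ≤ σ) (V : Type) [Fintype V] [DecidableEq V]
    (E : Fin σ → Finset (V × V)) (hT : IsToomGraph E)
    (v₀ : V) (ψ : V → (Fin d → ℤ) × ℤ)
    (A : Fin σ → Finset (Fin d → ℤ)) (hA0 : ∀ s, (0 : Fin d → ℤ) ∉ A s)
    -- (v): time decreases by 1 along every edge
    (htime : ∀ s, ∀ e ∈ E s, (ψ e.2).2 = (ψ e.1).2 - 1)
    -- (vi): sinks are embedded apart from all other vertices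
    (hsinkapart : ∀ v₁ v₂ : V, IsSink E v₁ → v₁ ≠ v₂ → ψ v₁ ≠ ψ v₂)
    -- (viii): edges of `E^⋆` starting at the space coordinate of a sink are vertical
    (hviii : ∀ s, ∀ e ∈ E s, (Internal E s e.1 ∨ e.1 = v₀) →
      (ψ e.1).1 ∈ (fun v => (ψ v).1) '' {v | IsSink E v} → (ψ e.2).1 = (ψ e.1).1)
    -- (x): other edges of `E^⋆` of charge `s` are diagonal with increment in `A_s`
    (hx : ∀ s, ∀ e ∈ E s, (Internal E s e.1 ∨ e.1 = v₀) →
      (ψ e.1).1 ∉ (fun v => (ψ v).1) '' {v | IsSink E v} → (ψ e.2).1 - (ψ e.1).1 ∈ A s)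
    -- (xi): edges from sources other than the root are diagonal with increment in `A`
    (hxi : ∀ s, ∀ e ∈ E s, ¬Internal E s e.1 → e.1 ≠ v₀ →
      (ψ e.2).1 - (ψ e.1).1 ∈ Finset.univ.biUnion A)
    -- (xii): sinks are embedded at time 0
    (hsink0 : ∀ v : V, IsSink E v → (ψ v).2 = 0) :
    (∀ (N : ℕ) (c : ℕ → V), (∀ t < N, ∃ s, (c t, c (t + 1)) ∈ E s) →
      ∃ jmp ≤ N, ∀ t < N, ((ψ (c (t + 1))).1 = (ψ (c t)).1 ↔ jmp ≤ t)) ∧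
    (∀ (s s' : Fin σ) (v w z : V), (v, w) ∈ E s → (w, z) ∈ E s' →
      (ψ w).1 = (ψ v).1 → (ψ z).1 = (ψ w).1) := by
  classical
  have hout : ∀ (s : Fin σ) (v w : V), (v, w) ∈ E s → outDeg (E s) v ≠ 0 := by
    intro s v w h hc
    have : (v, w) ∈ (E s).filter fun e => e.1 = v := Finset.mem_filter.2 ⟨h, rfl⟩
    rw [outDeg, Finset.card_eq_zero] at hc
    simp [hc] at this
  have hin : ∀ (s : Fin σ) (v w : V), (v, w) ∈ E s → inDeg (E s) w ≠ 0 := by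
    intro s v w h hc
    have : (v, w) ∈ (E s).filter fun e => e.2 = w := Finset.mem_filter.2 ⟨h, rfl⟩
    rw [inDeg, Finset.card_eq_zero] at hc
    simp [hc] at this
  have hA0' : (0 : Fin d → ℤ) ∉ Finset.univ.biUnion A := by
    simp only [Finset.mem_biUnion]
    rintro ⟨s, -, hs⟩
    exact hA0 s hs
  have key : ∀ (s s' : Fin σ) (v w z : V), (v, w) ∈ E s → (w, z) ∈ E s' →
      (ψ w).1 = (ψ v).1 → (ψ z).1 = (ψ w).1 := by
    intro s s' v w z hvw hwz hvert
    -- Step 1: (ψ v).1 is the space coordinate of a sink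
    have hmem : (ψ v).1 ∈ (fun v => (ψ v).1) '' {v | IsSink E v} := by
      by_contra hne
      have hzero : (ψ w).1 - (ψ v).1 = 0 := by rw [hvert, sub_self]
      rcases hT v with h1 | h2 | h3 | ⟨s₁, hs₁in, hs₁out, hrest⟩
      · exact hout s v w hvw (h1 s).2
      · by_cases hv0 : v = v₀
        · have := hx s (v, w) hvw (Or.inr hv0) hne
          rw [hzero] at this
          exact hA0 s this
        · have hni : ¬ Internal E s v := fun hi => by
            have := (h2 s).1; rw [hi.1] at this; exact one_ne_zero this
          have := hxi s (v, w) hvw hni hv0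
          rw [hzero] at this
          exact hA0' this
      · exact hout s v w hvw (h3 s).2
      · have hseq : s = s₁ := by
          by_contra hss
          exact hout s v w hvw (hrest s hss).2
        subst hseq
        have := hx s (v, w) hvw (Or.inl ⟨hs₁in, hs₁out⟩) hne
        rw [hzero] at this
        exact hA0 s this
    -- Step 2: w is internal of charge s'
    have hintw : Internal E s' w := by
      rcases hT w with h1 | h2 | h3 | ⟨s₂, hs₂in, hs₂out, hrest⟩
      · exact absurd (h1 s).1 (hin s v w hvw)
      · exact absurd (h2 s).1 (hin s v w hvw)
      · exact absurd (h3 s').2 (hout s' w z hwz)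
      · have hs' : s' = s₂ := by
          by_contra hss
          exact hout s' w z hwz (hrest s' hss).2
        subst hs'
        exact ⟨hs₂in, hs₂out⟩
    exact hviii s' (w, z) hwz (Or.inl hintw) (by rw [hvert]; exact hmem)
  refine ⟨?_, key⟩
  intro N c hc
  by_cases hex : ∃ t, t < N ∧ (ψ (c (t + 1))).1 = (ψ (c t)).1
  · set jmp := Nat.find hex with hjmp
    have hspec := Nat.find_spec hex
    refine ⟨jmp, le_of_lt hspec.1, ?_⟩
    have hforward : ∀ t, jmp ≤ t → t < N → (ψ (c (t + 1))).1 = (ψ (c t)).1 := by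
      intro t hle
      induction t, hle using Nat.le_induction with
      | base => exact fun _ => hspec.2
      | succ t ht ih =>
        intro ht1
        have htN : t < N := lt_trans (Nat.lt_succ_self t) ht1
        obtain ⟨s, hs⟩ := hc t htN
        obtain ⟨s', hs'⟩ := hc (t + 1) ht1
        exact key s s' (c t) (c (t + 1)) (c (t + 2)) hs hs' (ih htN)
    intro t htN
    constructor
    · intro hv
      by_contra hlt
      push_neg at hlt
      exact Nat.find_min hex hlt ⟨htN, hv⟩
    · intro hle
      exact hforward t hle htN
  · push_neg at hex
    exact ⟨N, le_rfl, fun t htN => ⟨fun hv => absurd hv (hex t htN), fun h => absurd htN (not_lt.2 h)⟩⟩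
end
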